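/- Let b, μ, ν, σ₁,…,σ₅ > 0 and let N, S, E, I, Q, R > 0 with N = S+E+I+Q+R. Then (b − μN − νI) − (b − μN − νI)/N² + (σ₁²S² + σ₂²E² + σ₃²I² + σ₄²Q² + σ₅²R²)/N³ ≤ ϖ − μ(N + 1/N), where ϖ = b + (1/(4b))·(2μ + ν + σ₁² + σ₂² + σ₃² + σ₄² + σ₅²)². -/

import Mathlib

/-!
Expanding `(b - μN - νI)/N²`, every term of the left-hand side is bounded separately:
`νI ≥ 0`, and since each compartment lies in `[0, N]`, `νI/N² ≤ ν/N` and `σ²X²/N³ ≤ σ²/N`.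
What remains is `K/N - b/N²` with `K = 2μ + ν + ∑ σᵢ²`, a concave quadratic in `1/N`
whose maximum is `K²/(4b)`.
-/

theorem mul_sub_mul_sq_le_sq_div {b : ℝ} (hb : 0 < b) (K t : ℝ) :
    K * t - b * t ^ 2 ≤ K ^ 2 / (4 * b) := by
  rw [le_div_iff₀ (by positivity)]
  nlinarith [sq_nonneg (K - 2 * b * t)]

theorem mul_pow_div_pow_succ_le_div {a x N : ℝ} (ha : 0 ≤ a) (hx : 0 ≤ x) (hxN : x ≤ N)
    (n : ℕ) : a * x ^ n / N ^ (n + 1) ≤ a / N := calc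
  a * x ^ n / N ^ (n + 1) ≤ a * N ^ n / N ^ (n + 1) := by
    have hN : 0 ≤ N := hx.trans hxN
    gcongr
  _ = a / N := by
    rcases eq_or_ne N 0 with rfl | hN
    · simp
    · field_simp; ring

theorem lyapunov_drift_general (b μ ν σ1 σ2 σ3 σ4 σ5 S E I Q R : ℝ)
    (hb : 0 < b) (hν : 0 < ν)
    (hS : 0 < S) (hE : 0 < E) (hI : 0 < I) (hQ : 0 < Q) (hR : 0 < R)
    (N : ℝ) (hN : N = S + E + I + Q + R) :
    (b - μ * N - ν * I) - (b - μ * N - ν * I) / N^2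
      + (σ1^2 * S^2 + σ2^2 * E^2 + σ3^2 * I^2 + σ4^2 * Q^2 + σ5^2 * R^2) / N^3
    ≤ (b + (1 / (4 * b)) * (2*μ + ν + σ1^2 + σ2^2 + σ3^2 + σ4^2 + σ5^2)^2)
      - μ * (N + 1 / N) := by
  have hN0 : N ≠ 0 := by rw [hN]; positivity
  have hνI_nonneg : 0 ≤ ν * I := by positivity
  have hνI := mul_pow_div_pow_succ_le_div hν.le hI.le (show I ≤ N by linarith) 1
  have hS2 := mul_pow_div_pow_succ_le_div (sq_nonneg σ1) hS.le (show S ≤ N by linarith) 2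
  have hE2 := mul_pow_div_pow_succ_le_div (sq_nonneg σ2) hE.le (show E ≤ N by linarith) 2
  have hI2 := mul_pow_div_pow_succ_le_div (sq_nonneg σ3) hI.le (show I ≤ N by linarith) 2
  have hQ2 := mul_pow_div_pow_succ_le_div (sq_nonneg σ4) hQ.le (show Q ≤ N by linarith) 2
  have hR2 := mul_pow_div_pow_succ_le_div (sq_nonneg σ5) hR.le (show R ≤ N by linarith) 2
  have hquad :=
    mul_sub_mul_sq_le_sq_div hb (2*μ + ν + σ1^2 + σ2^2 + σ3^2 + σ4^2 + σ5^2) N⁻¹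
  have hμN : μ * N / N ^ 2 = μ / N := by field_simp
  linear_combination hνI_nonneg + hνI + hS2 + hE2 + hI2 + hQ2 + hR2 + hquad + hμN

/-- The Lyapunov drift inequality `LV(X) ≤ ϖ − μ (N + 1/N)` for the stochastic
SEIQR model. -/
theorem lyapunov_drift (b μ ν σ1 σ2 σ3 σ4 σ5 S E I Q R : ℝ)
    (hb : 0 < b) (hμ : 0 < μ) (hν : 0 < ν)
    (hσ1 : 0 < σ1) (hσ2 : 0 < σ2) (hσ3 : 0 < σ3) (hσ4 : 0 < σ4) (hσ5 : 0 < σ5)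
    (hS : 0 < S) (hE : 0 < E) (hI : 0 < I) (hQ : 0 < Q) (hR : 0 < R)
    (N : ℝ) (hN : N = S + E + I + Q + R) :
    (b - μ * N - ν * I) - (b - μ * N - ν * I) / N^2
      + (σ1^2 * S^2 + σ2^2 * E^2 + σ3^2 * I^2 + σ4^2 * Q^2 + σ5^2 * R^2) / N^3
    ≤ (b + (1 / (4 * b)) * (2*μ + ν + σ1^2 + σ2^2 + σ3^2 + σ4^2 + σ5^2)^2)
      - μ * (N + 1 / N) :=
  lyapunov_drift_general b μ ν σ1 σ2 σ3 σ4 σ5 S E I Q R hb hν hS hE hI hQ hR N hN
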